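/- arXiv:1602.07205 — 5 statements merged into one kernel-verified Lean document; each statement's English description precedes it below -/
import Mathlib

section
/- Let 0 < α < 1, let t > 0, and let h : [0, t] → ℝ be continuously differentiable. Then (1/Γ(1-α)) ∫₀^t (t-τ)^{-α} h'(τ) dτ = ∫₀^∞ φ(t, θ) dθ, where φ(t, θ) = (2 sin(πα)/π) θ^{2α-1} ∫₀^t h'(τ) e^{-(t-τ) θ²} dτ. -/
/-!
Each exponential `exp (-(t - τ) θ²)` contributes `θ ^ (2α - 1)` weighted mass
`(t - τ) ^ (-α) Γ(α) / 2` (a Gamma integral after `u = θ²`), and Euler's reflection formula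
`Γ(α) Γ(1 - α) = π / sin (π α)` turns the prefactor `2 sin (π α) / π` into `1 / Γ(1 - α)`.
So integrating in `θ` first yields the Caputo integrand; the two integrals may be swapped
because the kernel is nonnegative and, by the same computation, `(t - τ) ^ (-α) |h' τ|` is
integrable.
-/

open Real Set intervalIntegral MeasureTheory

/-- `φ(t, θ) = ∫₀^t diffusiveKernel α (t - τ) θ * h' τ dτ`. -/
noncomputable def diffusiveKernel (α s θ : ℝ) : ℝ :=
  2 * sin (π * α) / π * θ ^ (2 * α - 1) * exp (-s * θ ^ 2)

theorem sin_pi_mul_div_pi_mul_Gamma_eq_inv_Gamma_one_sub {α : ℝ} (hα : sin (π * α) ≠ 0) :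
    sin (π * α) / π * Gamma α = (Gamma (1 - α))⁻¹ := by
  have hrefl := Gamma_mul_Gamma_one_sub α
  have hΓ : Gamma (1 - α) ≠ 0 := by
    intro h0
    rw [h0, mul_zero, eq_comm, div_eq_zero_iff] at hrefl
    exact hrefl.elim pi_ne_zero hα
  rw [eq_div_iff hα] at hrefl
  field_simp
  linear_combination hrefl

theorem sin_pi_mul_pos {α : ℝ} (hα0 : 0 < α) (hα1 : α < 1) : 0 < sin (π * α) :=
  sin_pos_of_pos_of_lt_pi (by positivity) (by nlinarith [pi_pos])

theorem diffusiveKernel_nonneg {α : ℝ} (hα0 : 0 < α) (hα1 : α < 1) (s : ℝ) {θ : ℝ}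
    (hθ : 0 ≤ θ) : 0 ≤ diffusiveKernel α s θ := by
  have := sin_pi_mul_pos hα0 hα1
  unfold diffusiveKernel
  positivity

theorem integrableOn_diffusiveKernel {α s : ℝ} (hα : 0 < α) (hs : 0 < s) :
    IntegrableOn (diffusiveKernel α s) (Ioi 0) := by
  have := (integrableOn_rpow_mul_exp_neg_mul_sq hs (s := 2 * α - 1) (by linarith)).const_mul
    (2 * sin (π * α) / π)
  refine IntegrableOn.congr_fun this (fun θ _ => ?_) measurableSet_Ioi
  simp only [diffusiveKernel, mul_assoc]

theorem integral_diffusiveKernel {α s : ℝ} (hα0 : 0 < α) (hα1 : α < 1) (hs : 0 < s) :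
    ∫ θ in Ioi 0, diffusiveKernel α s θ = s ^ (-α) / Gamma (1 - α) := by
  have hmoment : ∫ θ in Ioi (0 : ℝ), θ ^ (2 * α - 1) * exp (-s * θ ^ 2) =
      s ^ (-α) * (1 / 2) * Gamma α := by
    have := integral_rpow_mul_exp_neg_mul_rpow two_pos (q := 2 * α - 1) (by linarith) hs
    simp only [rpow_two] at this
    rw [this]
    congr 2 <;> ring_nf
  simp only [diffusiveKernel, mul_assoc]
  rw [MeasureTheory.integral_const_mul, hmoment, div_eq_mul_inv _ (Gamma _),
    ← sin_pi_mul_div_pi_mul_Gamma_eq_inv_Gamma_one_sub (sin_pi_mul_pos hα0 hα1).ne']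
  ring

theorem integrable_diffusiveKernel_mul_prod {α t : ℝ} (hα0 : 0 < α) (hα1 : α < 1) {g : ℝ → ℝ}
    (hg : IntegrableOn (fun τ => (t - τ) ^ (-α) * g τ) (Ioo 0 t)) :
    Integrable (fun p : ℝ × ℝ => diffusiveKernel α (t - p.1) p.2 * g p.1)
      ((volume.restrict (Ioo 0 t)).prod (volume.restrict (Ioi 0))) := by
  have hg_meas : AEStronglyMeasurable g (volume.restrict (Ioo 0 t)) := by
    have hc : Continuous fun τ : ℝ => (t - τ) ^ α :=
      (continuous_const.sub continuous_id).rpow_const fun _ => Or.inr hα0.le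
    refine (hc.aestronglyMeasurable.mul hg.1).congr
      (ae_restrict_of_forall_mem measurableSet_Ioo fun τ hτ => ?_)
    have hpos : 0 < (t - τ) ^ α := rpow_pos_of_pos (sub_pos.2 hτ.2) α
    simp only [Pi.mul_apply, rpow_neg (sub_pos.2 hτ.2).le]
    field_simp
  have hK_meas : Measurable fun p : ℝ × ℝ => diffusiveKernel α (t - p.1) p.2 := by
    unfold diffusiveKernel
    fun_prop
  have hmeas : AEStronglyMeasurable (fun p : ℝ × ℝ => diffusiveKernel α (t - p.1) p.2 * g p.1)
      ((volume.restrict (Ioo 0 t)).prod (volume.restrict (Ioi 0))) :=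
    hK_meas.aestronglyMeasurable.mul
      (hg_meas.comp_quasiMeasurePreserving Measure.quasiMeasurePreserving_fst)
  refine (integrable_prod_iff hmeas).2 ⟨?_, ?_⟩
  · filter_upwards [ae_restrict_mem measurableSet_Ioo] with τ hτ
    exact (integrableOn_diffusiveKernel hα0 (sub_pos.2 hτ.2)).mul_const _
  · refine (hg.norm.div_const (Gamma (1 - α))).congr ?_
    filter_upwards [ae_restrict_mem measurableSet_Ioo] with τ hτ
    have hs : 0 < t - τ := sub_pos.2 hτ.2
    calc ‖(t - τ) ^ (-α) * g τ‖ / Gamma (1 - α)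
        = ∫ θ in Ioi 0, diffusiveKernel α (t - τ) θ * ‖g τ‖ := by
          rw [MeasureTheory.integral_mul_const, integral_diffusiveKernel hα0 hα1 hs, norm_mul,
            norm_of_nonneg (rpow_nonneg hs.le _)]
          ring
      _ = ∫ θ in Ioi 0, ‖diffusiveKernel α (t - τ) θ * g τ‖ := by
          refine setIntegral_congr_fun measurableSet_Ioi fun θ hθ => ?_
          rw [norm_mul, norm_of_nonneg (diffusiveKernel_nonneg hα0 hα1 _ (le_of_lt hθ))]

theorem integral_Ioo_sub_rpow_neg_mul_eq_integral_diffusiveKernel {α t : ℝ} (hα0 : 0 < α)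
    (hα1 : α < 1) {g : ℝ → ℝ} (hg : IntegrableOn (fun τ => (t - τ) ^ (-α) * g τ) (Ioo 0 t)) :
    1 / Gamma (1 - α) * ∫ τ in Ioo 0 t, (t - τ) ^ (-α) * g τ =
      ∫ θ in Ioi 0, ∫ τ in Ioo 0 t, diffusiveKernel α (t - τ) θ * g τ := by
  rw [← integral_integral_swap (integrable_diffusiveKernel_mul_prod hα0 hα1 hg),
    ← MeasureTheory.integral_const_mul]
  refine setIntegral_congr_fun measurableSet_Ioo fun τ hτ => ?_
  rw [MeasureTheory.integral_mul_const, integral_diffusiveKernel hα0 hα1 (sub_pos.2 hτ.2)]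
  ring

theorem integrableOn_sub_rpow_neg_mul {α t : ℝ} (hα : α < 1) {g : ℝ → ℝ}
    (hg : ContinuousOn g (Icc 0 t)) :
    IntegrableOn (fun τ => (t - τ) ^ (-α) * g τ) (Ioo 0 t) := by
  have hrpow := ((intervalIntegrable_rpow' (r := -α) (a := 0) (b := t) (by linarith)
    ).comp_sub_left t).symm
  simp only [sub_zero, sub_self] at hrpow
  exact (hrpow.1.mono_set Ioo_subset_Ioc_self).mul_continuousOn_of_subset hg measurableSet_Ioo
    isCompact_Icc Ioo_subset_Icc_self

theorem caputo_diffusive_representation_general (α t : ℝ) (hα0 : 0 < α) (hα1 : α < 1) (ht : 0 < t)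
    (h' : ℝ → ℝ)
    (hcont : ContinuousOn h' (Set.Icc 0 t)) :
    (1 / Real.Gamma (1 - α)) * ∫ τ in (0 : ℝ)..t, (t - τ) ^ (-α) * h' τ =
      ∫ θ in Set.Ioi (0 : ℝ),
        (2 * Real.sin (Real.pi * α) / Real.pi) * θ ^ (2 * α - 1) *
          ∫ τ in (0 : ℝ)..t, h' τ * Real.exp (-(t - τ) * θ ^ 2) := by
  simp only [integral_of_le ht.le, integral_Ioc_eq_integral_Ioo]
  rw [integral_Ioo_sub_rpow_neg_mul_eq_integral_diffusiveKernel hα0 hα1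
    (integrableOn_sub_rpow_neg_mul hα1 hcont)]
  congr 1 with θ
  rw [← MeasureTheory.integral_const_mul]
  congr 1 with τ
  simp only [diffusiveKernel, neg_mul]
  ring

/-- Diffusive representation of the Caputo fractional derivative: for `0 < α < 1`,
`t > 0` and `h` continuously differentiable on `[0, t]` with derivative `h'`,
`(1/Γ(1-α)) ∫₀^t (t-τ)^(-α) h'(τ) dτ = ∫₀^∞ φ(t,θ) dθ`, where
`φ(t,θ) = (2 sin(πα)/π) θ^(2α-1) ∫₀^t h'(τ) exp(-(t-τ)θ²) dτ`. -/
theorem caputo_diffusive_representation (α t : ℝ) (hα0 : 0 < α) (hα1 : α < 1) (ht : 0 < t)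
    (h h' : ℝ → ℝ)
    (hderiv : ∀ τ ∈ Set.Icc (0 : ℝ) t, HasDerivWithinAt h (h' τ) (Set.Icc 0 t) τ)
    (hcont : ContinuousOn h' (Set.Icc 0 t)) :
    (1 / Real.Gamma (1 - α)) * ∫ τ in (0 : ℝ)..t, (t - τ) ^ (-α) * h' τ =
      ∫ θ in Set.Ioi (0 : ℝ),
        (2 * Real.sin (Real.pi * α) / Real.pi) * θ ^ (2 * α - 1) *
          ∫ τ in (0 : ℝ)..t, h' τ * Real.exp (-(t - τ) * θ ^ 2) :=
  caputo_diffusive_representation_general α t hα0 hα1 ht h' hcont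
end

section
/- Let 0 < β < 1, let t > 0, and let u : [0, t] → ℝ be continuous. Define γ_β = 2 sin(πβ)/π and, for θ > 0, ψ(t, θ) = γ_β θ^{1-2β} ∫₀^t u(τ) e^{-(t-τ) θ²} dτ. Then the Riemann–Liouville fractional integral of order β satisfies I_t^β u(t) := (1/Γ(β)) ∫₀^t (t-τ)^{β-1} u(τ) dτ = ∫₀^∞ ψ(t, θ) dθ. -/
/-! The Gaussian moment `∫₀^∞ θ^(1-2β) e^(-sθ²) dθ` equals `Γ(1-β)/2 · s^(β-1)`
(substitute `σ = sθ²`), and Euler's reflection formula `Γ(β) Γ(1-β) = π / sin(πβ)` turns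
`γ_β` times it into `s^(β-1)/Γ(β)`. With `s = t - τ` the claim is Fubini's theorem: the same
computation shows that the `θ`-integral of the absolute value of the integrand is a multiple
of `|u τ| (t-τ)^(β-1)`, which is integrable on `(0, t)` since `β > 0`. -/

open Real Set MeasureTheory

theorem integral_rpow_mul_exp_neg_mul_sq {q s : ℝ} (hq : -1 < q) (hs : 0 < s) :
    ∫ θ in Ioi (0 : ℝ), θ ^ q * exp (-s * θ ^ 2)
      = Gamma ((q + 1) / 2) / 2 * s ^ (-(q + 1) / 2) := by
  simp only [← rpow_two]
  rw [integral_rpow_mul_exp_neg_mul_rpow two_pos hq hs]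
  ring

theorem Gamma_one_sub_mul_sin_div_pi {β : ℝ} (h : sin (π * β) ≠ 0) :
    Gamma (1 - β) * (sin (π * β) / π) = (Gamma β)⁻¹ := by
  refine eq_inv_of_mul_eq_one_right ?_
  rw [← mul_assoc, Gamma_mul_Gamma_one_sub]
  field_simp

theorem integrableOn_sub_rpow_Icc {r t : ℝ} (hr : -1 < r) (ht : 0 ≤ t) :
    IntegrableOn (fun τ => (t - τ) ^ r) (Icc 0 t) := by
  have h := (intervalIntegral.intervalIntegrable_rpow' (a := 0) (b := t) hr).comp_sub_left t
  rw [sub_zero, sub_self] at h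
  exact (intervalIntegrable_iff_integrableOn_Icc_of_le ht).1 h.symm

section DiffusiveIntegrand

variable {β : ℝ}

theorem integrableOn_diffusive_slice (hβ : β < 1) {s : ℝ} (hs : 0 < s) (c a : ℝ) :
    IntegrableOn (fun θ => c * θ ^ (1 - 2 * β) * (a * exp (-s * θ ^ 2))) (Ioi 0) :=
  IntegrableOn.congr_fun
    ((integrableOn_rpow_mul_exp_neg_mul_sq hs (s := 1 - 2 * β) (by linarith)).const_mul (c * a))
    (fun θ _ => by ring) measurableSet_Ioi

theorem integral_diffusive_slice (hβ : β < 1) {s : ℝ} (hs : 0 < s) (c a : ℝ) :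
    ∫ θ in Ioi (0 : ℝ), c * θ ^ (1 - 2 * β) * (a * exp (-s * θ ^ 2))
      = c * a * (Gamma (1 - β) / 2 * s ^ (β - 1)) := by
  have hmoment := integral_rpow_mul_exp_neg_mul_sq (q := 1 - 2 * β) (by linarith) hs
  rw [show (1 - 2 * β + 1) / 2 = 1 - β by ring, show -(1 - 2 * β + 1) / 2 = β - 1 by ring]
    at hmoment
  rw [← hmoment, ← integral_const_mul]
  exact setIntegral_congr_fun measurableSet_Ioi fun θ _ => by ring

theorem integrable_diffusive_integrand (hβ0 : 0 < β) (hβ1 : β < 1) {t : ℝ} (ht : 0 ≤ t)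
    {u : ℝ → ℝ} (hu : ContinuousOn u (Icc 0 t)) (c : ℝ) :
    Integrable (fun p : ℝ × ℝ => c * p.1 ^ (1 - 2 * β) * (u p.2 * exp (-(t - p.2) * p.1 ^ 2)))
      ((volume.restrict (Ioi 0)).prod (volume.restrict (Ioo 0 t))) := by
  have hmeas : AEStronglyMeasurable
      (fun p : ℝ × ℝ => c * p.1 ^ (1 - 2 * β) * (u p.2 * exp (-(t - p.2) * p.1 ^ 2)))
      ((volume.restrict (Ioi 0)).prod (volume.restrict (Ioo 0 t))) := by
    have hu' : AEStronglyMeasurable u (volume.restrict (Ioo 0 t)) :=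
      (hu.mono Ioo_subset_Icc_self).aestronglyMeasurable measurableSet_Ioo
    have hrest : Measurable fun p : ℝ × ℝ =>
        c * p.1 ^ (1 - 2 * β) * exp (-(t - p.2) * p.1 ^ 2) := by
      fun_prop
    refine (hrest.aestronglyMeasurable.mul hu'.comp_snd).congr (.of_forall fun p => ?_)
    simp only [Pi.mul_apply]
    ring
  refine (integrable_prod_iff' hmeas).2 ⟨?_, ?_⟩
  · filter_upwards [ae_restrict_mem measurableSet_Ioo] with τ hτ
    exact integrableOn_diffusive_slice hβ1 (sub_pos.2 hτ.2) c (u τ)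
  · have hkernel := integrableOn_sub_rpow_Icc (show (-1 : ℝ) < β - 1 by linarith) ht
    have hbound : IntegrableOn (fun τ => |c| * |u τ| * (Gamma (1 - β) / 2 * (t - τ) ^ (β - 1)))
        (Icc 0 t) :=
      IntegrableOn.congr_fun ((hkernel.mul_continuousOn hu.abs isCompact_Icc).const_mul
        (|c| * (Gamma (1 - β) / 2))) (fun τ _ => by ring) measurableSet_Icc
    refine (hbound.mono_set Ioo_subset_Icc_self).congr ?_
    filter_upwards [ae_restrict_mem measurableSet_Ioo] with τ hτ
    rw [← integral_diffusive_slice hβ1 (sub_pos.2 hτ.2) |c| |u τ|]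
    refine setIntegral_congr_fun measurableSet_Ioi fun θ (hθ : 0 < θ) => ?_
    simp only [norm_mul, norm_eq_abs, abs_of_pos (rpow_pos_of_pos hθ _), abs_of_pos (exp_pos _)]

end DiffusiveIntegrand

/-- Diffusive representation of the Riemann–Liouville fractional integral: for
`0 < β < 1`, `t > 0` and `u` continuous on `[0, t]`,
`(1/Γ(β)) ∫₀^t (t-τ)^(β-1) u(τ) dτ = ∫₀^∞ ψ(t,θ) dθ`, where
`ψ(t,θ) = γ_β θ^(1-2β) ∫₀^t u(τ) exp(-(t-τ)θ²) dτ` and `γ_β = 2 sin(πβ)/π`. -/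
theorem riemannLiouville_diffusive_representation (β t : ℝ) (hβ0 : 0 < β) (hβ1 : β < 1)
    (ht : 0 < t) (u : ℝ → ℝ) (hcont : ContinuousOn u (Set.Icc 0 t)) :
    (1 / Real.Gamma β) * ∫ τ in (0 : ℝ)..t, (t - τ) ^ (β - 1) * u τ =
      ∫ θ in Set.Ioi (0 : ℝ),
        (2 * Real.sin (Real.pi * β) / Real.pi) * θ ^ (1 - 2 * β) *
          ∫ τ in (0 : ℝ)..t, u τ * Real.exp (-(t - τ) * θ ^ 2) := by
  have hsin : sin (π * β) ≠ 0 :=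
    (sin_pos_of_pos_of_lt_pi (by positivity) (by nlinarith [pi_pos])).ne'
  calc (1 / Gamma β) * ∫ τ in (0 : ℝ)..t, (t - τ) ^ (β - 1) * u τ
      = ∫ τ in Ioo 0 t, ∫ θ in Ioi 0,
          2 * sin (π * β) / π * θ ^ (1 - 2 * β) * (u τ * exp (-(t - τ) * θ ^ 2)) := by
        rw [intervalIntegral.integral_of_le ht.le, integral_Ioc_eq_integral_Ioo,
          ← integral_const_mul]
        refine setIntegral_congr_fun measurableSet_Ioo fun τ hτ => ?_
        rw [integral_diffusive_slice hβ1 (sub_pos.2 hτ.2), one_div,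
          ← Gamma_one_sub_mul_sin_div_pi hsin]
        ring
    _ = ∫ θ in Ioi 0, ∫ τ in Ioo 0 t,
          2 * sin (π * β) / π * θ ^ (1 - 2 * β) * (u τ * exp (-(t - τ) * θ ^ 2)) :=
        (integral_integral_swap (integrable_diffusive_integrand hβ0 hβ1 ht.le hcont _)).symm
    _ = _ := by
        refine setIntegral_congr_fun measurableSet_Ioi fun θ _ => ?_
        rw [intervalIntegral.integral_of_le ht.le, integral_Ioc_eq_integral_Ioo,
          integral_const_mul]
end

section
/- Let 0 < α < 1, set β = 1 - α and γ_β = 2 sin(πβ)/π, let t > 0, and let u : [0, t] → ℝ be continuously differentiable. For θ > 0 define Ψ(θ) = γ_β u(0) / θ^{1+2β} and ψ(t, θ) = Ψ(θ) e^{-θ² t} + γ_β θ^{1-2β} ∫₀^t u(τ) e^{-(t-τ) θ²} dτ. Then the Caputo fractional derivative satisfies D_t^α u(t) = ∫₀^∞ ( -θ² ψ(t, θ) + γ_β θ^{1-2β} u(t) ) dθ. -/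
/-!
Integrating by parts in `τ`, the initial datum `Ψ` exactly cancels the boundary term at `τ = 0`,
so that `-θ² ψ(t, θ) + γ_β θ^{1-2β} u(t) = γ_β θ^{1-2β} ∫₀^t u'(τ) e^{-(t-τ)θ²} dτ`.
The moment `∫₀^∞ θ^{1-2β} e^{-sθ²} dθ = s^{β-1} Γ(1-β)/2` both justifies exchanging the
`θ`- and `τ`-integrals and produces the Caputo kernel `(t-τ)^{-α}`; the reflection formula
`Γ(β) Γ(1-β) = π / sin(πβ)` then turns `γ_β Γ(1-β)/2` into `1/Γ(β) = 1/Γ(1-α)`.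
-/

open Real Set intervalIntegral MeasureTheory

lemma integral_Ioi_rpow_mul_exp_neg_mul_sq {β b : ℝ} (hβ : β < 1) (hb : 0 < b) :
    ∫ θ in Ioi (0 : ℝ), θ ^ (1 - 2 * β) * exp (-b * θ ^ 2) =
      b ^ (β - 1) * (Gamma (1 - β) / 2) := by
  have h := integral_rpow_mul_exp_neg_mul_rpow two_pos (show -1 < 1 - 2 * β by linarith) hb
  simp only [rpow_two] at h
  rw [h, show -(1 - 2 * β + 1) / 2 = β - 1 by ring, show (1 - 2 * β + 1) / 2 = 1 - β by ring]
  ring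

lemma two_mul_sin_div_pi_mul_Gamma_one_sub {β : ℝ} (hβ : sin (π * β) ≠ 0) :
    2 * sin (π * β) / π * (Gamma (1 - β) / 2) = 1 / Gamma β := by
  have hrefl := Gamma_mul_Gamma_one_sub β
  have hΓ : Gamma β ≠ 0 := by
    intro h
    rw [h, zero_mul, eq_comm, div_eq_zero_iff] at hrefl
    exact hrefl.elim pi_ne_zero hβ
  rw [eq_div_iff hΓ, show 2 * sin (π * β) / π * (Gamma (1 - β) / 2) * Gamma β =
    sin (π * β) / π * (Gamma β * Gamma (1 - β)) by ring, hrefl]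
  field_simp

lemma integral_deriv_mul_exp_neg_mul {u u' : ℝ → ℝ} {a b : ℝ} (hab : a ≤ b)
    (hu : ∀ τ ∈ Icc a b, HasDerivWithinAt u (u' τ) (Icc a b) τ)
    (hu' : ContinuousOn u' (Icc a b)) (l : ℝ) :
    ∫ τ in a..b, u' τ * exp (-(b - τ) * l) =
      u b - u a * exp (-(b - a) * l) - l * ∫ τ in a..b, u τ * exp (-(b - τ) * l) := by
  have hexp : Continuous fun τ => exp (-(b - τ) * l) := by fun_prop
  have hv : ∀ τ ∈ Icc a b, HasDerivWithinAt (fun τ => exp (-(b - τ) * l))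
      (exp (-(b - τ) * l) * l) (Icc a b) τ := by
    intro τ _
    have h : HasDerivAt (fun τ => -(b - τ) * l) l τ := by
      simpa using ((hasDerivAt_id τ).const_sub b).neg.mul_const l
    exact h.exp.hasDerivWithinAt
  have hibp := integral_mul_deriv_eq_deriv_mul_of_hasDerivWithinAt (u := u) (u' := u')
    (v' := fun τ => exp (-(b - τ) * l) * l)
    (by rwa [uIcc_of_le hab]) (by rwa [uIcc_of_le hab])
    (hu'.mono (uIcc_of_le hab).subset |>.intervalIntegrable)
    ((hexp.mul continuous_const).intervalIntegrable a b)
  rw [sub_self, neg_zero, zero_mul, exp_zero, mul_one] at hibp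
  rw [← intervalIntegral.integral_const_mul]
  have hcomm : ∫ τ in a..b, l * (u τ * exp (-(b - τ) * l)) =
      ∫ τ in a..b, u τ * (exp (-(b - τ) * l) * l) := by
    congr 1; ext τ; ring
  linarith

section Fubini

variable {β a t : ℝ} {g : ℝ → ℝ}

lemma integrable_rpow_mul_exp_neg_mul_sq_kernel (hβ : β < 1)
    (hgm : AEStronglyMeasurable g (volume.restrict (Ioo a t)))
    (hg : IntegrableOn (fun τ => (t - τ) ^ (β - 1) * g τ) (Ioo a t)) :
    Integrable (fun p : ℝ × ℝ => g p.2 * (p.1 ^ (1 - 2 * β) * exp (-(t - p.2) * p.1 ^ 2)))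
      ((volume.restrict (Ioi 0)).prod (volume.restrict (Ioo a t))) := by
  have hmeas : AEStronglyMeasurable
      (fun p : ℝ × ℝ => g p.2 * (p.1 ^ (1 - 2 * β) * exp (-(t - p.2) * p.1 ^ 2)))
      ((volume.restrict (Ioi 0)).prod (volume.restrict (Ioo a t))) :=
    hgm.comp_snd.mul (by fun_prop : Measurable fun p : ℝ × ℝ =>
      p.1 ^ (1 - 2 * β) * exp (-(t - p.2) * p.1 ^ 2)).aestronglyMeasurable
  refine (integrable_prod_iff' hmeas).2 ⟨?_, ?_⟩
  · filter_upwards [ae_restrict_mem measurableSet_Ioo] with τ hτ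
    exact (integrableOn_rpow_mul_exp_neg_mul_sq (sub_pos.2 hτ.2)
      (show -1 < 1 - 2 * β by linarith)).const_mul (g τ)
  · refine (hg.norm.mul_const (Gamma (1 - β) / 2)).congr ?_
    filter_upwards [ae_restrict_mem measurableSet_Ioo] with τ hτ
    have hs : 0 < t - τ := sub_pos.2 hτ.2
    calc ‖(t - τ) ^ (β - 1) * g τ‖ * (Gamma (1 - β) / 2)
        = ‖g τ‖ * ∫ θ in Ioi 0, θ ^ (1 - 2 * β) * exp (-(t - τ) * θ ^ 2) := by
          rw [integral_Ioi_rpow_mul_exp_neg_mul_sq hβ hs, norm_mul,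
            norm_of_nonneg (rpow_nonneg hs.le _)]
          ring
      _ = ∫ θ in Ioi 0, ‖g τ * (θ ^ (1 - 2 * β) * exp (-(t - τ) * θ ^ 2))‖ := by
          rw [← MeasureTheory.integral_const_mul]
          refine setIntegral_congr_fun measurableSet_Ioi fun θ (hθ : 0 < θ) => ?_
          rw [norm_mul, norm_of_nonneg (r := θ ^ (1 - 2 * β) * _) (by positivity)]

lemma integral_Ioi_rpow_mul_integral_exp_neg_mul_sq (hβ : β < 1)
    (hgm : AEStronglyMeasurable g (volume.restrict (Ioo a t)))
    (hg : IntegrableOn (fun τ => (t - τ) ^ (β - 1) * g τ) (Ioo a t)) :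
    ∫ θ in Ioi 0, θ ^ (1 - 2 * β) * ∫ τ in Ioo a t, g τ * exp (-(t - τ) * θ ^ 2) =
      Gamma (1 - β) / 2 * ∫ τ in Ioo a t, (t - τ) ^ (β - 1) * g τ := by
  calc _ = ∫ θ in Ioi 0, ∫ τ in Ioo a t, g τ * (θ ^ (1 - 2 * β) * exp (-(t - τ) * θ ^ 2)) := by
        congr 1; ext θ
        rw [← MeasureTheory.integral_const_mul]
        congr 1; ext τ; ring
    _ = ∫ τ in Ioo a t, ∫ θ in Ioi 0, g τ * (θ ^ (1 - 2 * β) * exp (-(t - τ) * θ ^ 2)) :=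
        integral_integral_swap (integrable_rpow_mul_exp_neg_mul_sq_kernel hβ hgm hg)
    _ = ∫ τ in Ioo a t, Gamma (1 - β) / 2 * ((t - τ) ^ (β - 1) * g τ) := by
        refine setIntegral_congr_fun measurableSet_Ioo fun τ hτ => ?_
        rw [MeasureTheory.integral_const_mul,
          integral_Ioi_rpow_mul_exp_neg_mul_sq hβ (sub_pos.2 hτ.2)]
        ring
    _ = _ := MeasureTheory.integral_const_mul _ _

end Fubini

lemma integrableOn_sub_rpow_mul_of_continuousOn {β a t : ℝ} {g : ℝ → ℝ} (hβ : 0 < β)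
    (hat : a ≤ t) (hg : ContinuousOn g (Icc a t)) :
    IntegrableOn (fun τ => (t - τ) ^ (β - 1) * g τ) (Icc a t) := by
  have h := (intervalIntegrable_rpow' (show -1 < β - 1 by linarith)).comp_sub_left t (a := 0)
    (b := t - a)
  rw [sub_zero, sub_sub_cancel] at h
  exact ((intervalIntegrable_iff_integrableOn_Icc_of_le hat).1 h.symm).mul_continuousOn hg
    isCompact_Icc

/-- Extended diffusive representation of the Caputo fractional derivative.
For `0 < α < 1`, `β = 1 - α`, `γ_β = 2 sin(πβ)/π`, `t > 0` and `u` continuously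
differentiable on `[0, t]` with derivative `u'`, setting
`Ψ(θ) = γ_β u(0)/θ^(1+2β)` and
`ψ(t,θ) = Ψ(θ) e^(-θ² t) + γ_β θ^(1-2β) ∫₀^t u(τ) e^(-(t-τ)θ²) dτ`, the Caputo
derivative satisfies
`D_t^α u(t) = ∫₀^∞ (-θ² ψ(t,θ) + γ_β θ^(1-2β) u(t)) dθ`. -/
theorem caputo_extended_diffusive_representation (α t : ℝ) (hα0 : 0 < α) (hα1 : α < 1)
    (ht : 0 < t) (u u' : ℝ → ℝ)
    (hderiv : ∀ τ ∈ Set.Icc (0 : ℝ) t, HasDerivWithinAt u (u' τ) (Set.Icc 0 t) τ)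
    (hcont : ContinuousOn u' (Set.Icc 0 t))
    (β γβ : ℝ) (hβ : β = 1 - α) (hγ : γβ = 2 * Real.sin (Real.pi * β) / Real.pi)
    (Ψ : ℝ → ℝ) (hΨ : ∀ θ : ℝ, 0 < θ → Ψ θ = γβ * u 0 / θ ^ (1 + 2 * β))
    (ψ : ℝ → ℝ → ℝ)
    (hψ : ∀ θ : ℝ, 0 < θ → ψ t θ =
      Ψ θ * Real.exp (-θ ^ 2 * t) +
        γβ * θ ^ (1 - 2 * β) * ∫ τ in (0 : ℝ)..t, u τ * Real.exp (-(t - τ) * θ ^ 2)) :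
    (1 / Real.Gamma (1 - α)) * ∫ τ in (0 : ℝ)..t, (t - τ) ^ (-α) * u' τ =
      ∫ θ in Set.Ioi (0 : ℝ), (-θ ^ 2 * ψ t θ + γβ * θ ^ (1 - 2 * β) * u t) := by
  have hβ0 : 0 < β := by linarith
  have hsin : sin (π * β) ≠ 0 :=
    (sin_pos_of_pos_of_lt_pi (by positivity) (by nlinarith [pi_pos])).ne'
  have hdiffusive : ∀ θ ∈ Ioi (0 : ℝ), -θ ^ 2 * ψ t θ + γβ * θ ^ (1 - 2 * β) * u t =
      γβ * (θ ^ (1 - 2 * β) * ∫ τ in Ioo 0 t, u' τ * exp (-(t - τ) * θ ^ 2)) := by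
    intro θ (hθ : 0 < θ)
    have hpow : θ ^ 2 / θ ^ (1 + 2 * β) = θ ^ (1 - 2 * β) := by
      rw [← rpow_two, ← rpow_sub hθ]
      congr 1
      ring
    rw [hψ θ hθ, hΨ θ hθ, ← integral_Ioc_eq_integral_Ioo, ← integral_of_le ht.le,
      integral_deriv_mul_exp_neg_mul ht.le hderiv hcont, sub_zero, ← hpow]
    ring_nf
  have hint := integrableOn_sub_rpow_mul_of_continuousOn hβ0 ht.le hcont
  rw [setIntegral_congr_fun measurableSet_Ioi hdiffusive, MeasureTheory.integral_const_mul,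
    integral_Ioi_rpow_mul_integral_exp_neg_mul_sq (by linarith)
      (hcont.mono Ioo_subset_Icc_self |>.aestronglyMeasurable measurableSet_Ioo)
      (hint.mono_set Ioo_subset_Icc_self),
    ← mul_assoc, hγ, two_mul_sin_div_pi_mul_Gamma_one_sub hsin, integral_of_le ht.le,
    integral_Ioc_eq_integral_Ioo, show 1 - α = β by linarith, show -α = β - 1 by linarith]
end

section
/- Let 0 < α < 1, ε > 0, γ_α = 2 sin(πα)/π, let μ_1, …, μ_L be positive reals and let the nodes satisfy 0 < θ_1 < θ_2 < ⋯ < θ_L. Let S be the real (L+1)×(L+1) matrix with entries S_{0,0} = 0, S_{0,ℓ} = −ε μ_ℓ for ℓ = 1, …, L, S_{j,0} = 0 for j = 1, …, L, and S_{j,ℓ} = −(δ_{jℓ} θ_j² + ε γ_α θ_j^{2α−1} μ_ℓ) for j, ℓ = 1, …, L (δ the Kronecker delta). Then 0 is a simple eigenvalue of S, and S has exactly L further eigenvalues λ_1, …, λ_L, all real and negative, satisfying the interlacing λ_L < −θ_L² < ⋯ < −θ_{ℓ+1}² < λ_ℓ < −θ_ℓ² < ⋯ < λ_1 < −θ_1²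 < 0. -/
open Matrix Polynomial Finset Filter

/-!
The first column of `S` vanishes, so `charpoly S = X * charpoly M` for the lower-right block
`M = diagonal (-θ²) - vecMulVec u μ`, `u_ℓ = ε γ_α θ_ℓ^(2α-1)`, a rank-one perturbation of a
diagonal matrix. By the matrix determinant lemma `charpoly M` is the secular polynomial
`∏ k, (X + θ_k²) + ∑ ℓ, u_ℓ μ_ℓ ∏ k ≠ ℓ, (X + θ_k²)`, whose value at `-θ_j²` has the sign
`(-1)^j` because every `u_ℓ μ_ℓ` is positive. The intermediate value theorem then gives a root in
each gap `(-θ_(j+1)², -θ_j²)`, and, the polynomial being monic of degree `L`, one more below the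
smallest node; these `L` distinct roots are all of its roots.
-/

variable {n : ℕ}

theorem Matrix.charpoly_eq_X_mul_charpoly_submatrix_succ {R : Type*} [CommRing R]
    (A : Matrix (Fin (n + 1)) (Fin (n + 1)) R) (hA : ∀ i, A i 0 = 0) :
    A.charpoly = X * (A.submatrix Fin.succ Fin.succ).charpoly := by
  have hcol : ∀ i : Fin n, charmatrix A i.succ 0 = 0 := fun i => by
    rw [charmatrix_apply_ne _ _ _ (Fin.succ_ne_zero i), hA, map_zero, neg_zero]
  rw [charpoly, det_succ_column_zero, Fin.sum_univ_succ]
  simp only [hcol, zero_mul, mul_zero, sum_const_zero, add_zero, Fin.val_zero, pow_zero,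
    one_mul, charmatrix_apply_eq, hA, map_zero, sub_zero, Fin.succAbove_zero]
  congr 2
  ext i j
  obtain rfl | hij := eq_or_ne i j
  · simp [charmatrix_apply_eq]
  · simp [charmatrix_apply_ne _ _ _ hij,
      charmatrix_apply_ne _ _ _ ((Fin.succ_injective _).ne hij)]

theorem Matrix.det_diagonal_add_vecMulVec {m K : Type*} [Fintype m]
    [DecidableEq m] [Field K] (d u w : m → K) (hd : ∀ i, d i ≠ 0) :
    (diagonal d + vecMulVec u w).det = ∏ i, d i + ∑ i, u i * w i * ∏ k ∈ univ.erase i, d k := by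
  have hfactor : diagonal d + vecMulVec u w = diagonal d * (1 + vecMulVec (u / d) w) := by
    ext i j
    rw [diagonal_mul, add_apply, add_apply, vecMulVec_apply, vecMulVec_apply, mul_add,
      Pi.div_apply, ← mul_assoc, mul_div_cancel₀ _ (hd i), one_apply, diagonal_apply]
    split_ifs <;> ring
  rw [hfactor, det_mul, det_diagonal, vecMulVec_eq Unit, det_one_add_replicateCol_mul_replicateRow,
    mul_add, mul_one, dotProduct, mul_sum]
  congr 1
  refine sum_congr rfl fun i _ => ?_
  rw [← mul_prod_erase univ d (mem_univ i), Pi.div_apply]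
  field_simp [hd i]

section Secular

variable {R : Type*} [CommRing R]

-- `∏ i, (X - s i) * (1 + ∑ i, b i / (X - s i))` with the denominators cleared.
noncomputable def secularPoly (s b : Fin n → R) : R[X] :=
  ∏ i, (X - C (s i)) + ∑ i, C (b i) * ∏ k ∈ univ.erase i, (X - C (s k))

theorem eval_secularPoly (s b : Fin n → R) (x : R) :
    (secularPoly s b).eval x
      = ∏ i, (x - s i) + ∑ i, b i * ∏ k ∈ univ.erase i, (x - s k) := by
  simp [secularPoly, eval_prod, eval_finsetSum]

theorem eval_secularPoly_self (s b : Fin n → R) (j : Fin n) :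
    (secularPoly s b).eval (s j) = b j * ∏ k ∈ univ.erase j, (s j - s k) := by
  rw [eval_secularPoly, prod_eq_zero (mem_univ j) (sub_self _), zero_add,
    sum_eq_single j (fun i _ hij => by
      rw [prod_eq_zero (mem_erase.2 ⟨Ne.symm hij, mem_univ j⟩) (sub_self _), mul_zero])
      (by simp)]

variable [Nontrivial R]

theorem degree_sum_C_mul_prod_erase_lt (s b : Fin n → R) :
    (∑ i, C (b i) * ∏ k ∈ univ.erase i, (X - C (s k))).degree
      < (∏ i, (X - C (s i))).degree := by
  rw [degree_eq_natDegree (monic_prod_X_sub_C _ _).ne_zero, natDegree_finsetProd_X_sub_C_eq_card,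
    card_univ, Fintype.card_fin]
  refine (degree_sum_le _ _).trans_lt ((Finset.sup_lt_iff (WithBot.bot_lt_coe n)).2 fun i _ => ?_)
  refine (degree_mul_le _ _).trans_lt ?_
  rw [degree_eq_natDegree (monic_prod_X_sub_C _ _).ne_zero, natDegree_finsetProd_X_sub_C_eq_card,
    card_erase_of_mem (mem_univ i), card_univ, Fintype.card_fin]
  calc (C (b i)).degree + ((n - 1 : ℕ) : WithBot ℕ) ≤ 0 + ((n - 1 : ℕ) : WithBot ℕ) :=
        add_le_add_left degree_C_le _
    _ < n := by rw [zero_add]; exact_mod_cast Nat.sub_lt i.pos one_pos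

theorem secularPoly_monic (s b : Fin n → R) : (secularPoly s b).Monic :=
  (monic_prod_X_sub_C _ _).add_of_left (degree_sum_C_mul_prod_erase_lt s b)

theorem natDegree_secularPoly (s b : Fin n → R) : (secularPoly s b).natDegree = n := by
  rw [secularPoly, natDegree_add_eq_left_of_degree_lt (degree_sum_C_mul_prod_erase_lt s b),
    natDegree_finsetProd_X_sub_C_eq_card, card_univ, Fintype.card_fin]

end Secular

theorem Matrix.charpoly_diagonal_sub_vecMulVec {K : Type*} [Field K] [Infinite K]
    (s u w : Fin n → K) : (diagonal s - vecMulVec u w).charpoly = secularPoly s (u * w) := by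
  refine eq_of_infinite_eval_eq _ _ ((Set.finite_range s).infinite_compl.mono fun x hx => ?_)
  have hd : ∀ i, x - s i ≠ 0 := fun i h => hx ⟨i, (sub_eq_zero.1 h).symm⟩
  have hsub : scalar _ x - (diagonal s - vecMulVec u w)
      = diagonal (fun i => x - s i) + vecMulVec u w := by
    rw [scalar_apply, sub_sub_eq_add_sub, add_sub_right_comm, diagonal_sub]
  rw [Set.mem_ofPred_eq, eval_charpoly, hsub, det_diagonal_add_vecMulVec _ _ _ hd, eval_secularPoly]
  rfl

theorem neg_one_pow_mul_prod_erase_sub_pos {K : Type*} [Field K] [LinearOrder K]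
    [IsStrictOrderedRing K] {s : Fin n → K} (hs : StrictAnti s) (j : Fin n) :
    0 < (-1) ^ (j : ℕ) * ∏ k ∈ univ.erase j, (s j - s k) := by
  have hsplit : univ.erase j = Iio j ∪ Ioi j := by
    ext k
    simpa only [mem_erase, mem_union, mem_Iio, mem_Ioi, mem_univ, and_true] using ne_iff_lt_or_gt
  have hdisj : Disjoint (Iio j) (Ioi j) :=
    disjoint_left.2 fun k hk hk' => (mem_Iio.1 hk).asymm (mem_Ioi.1 hk')
  have hIio : ∏ k ∈ Iio j, (s j - s k) = (-1) ^ (j : ℕ) * ∏ k ∈ Iio j, (s k - s j) := by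
    rw [← Fin.card_Iio j, ← prod_neg]
    simp
  rw [hsplit, prod_union hdisj, hIio, ← mul_assoc, ← mul_assoc, ← pow_add,
    Even.neg_one_pow ⟨_, rfl⟩, one_mul]
  exact mul_pos (prod_pos fun k hk => sub_pos.2 (hs (mem_Iio.1 hk)))
    (prod_pos fun k hk => sub_pos.2 (hs (mem_Ioi.1 hk)))

theorem Polynomial.Monic.exists_lt_neg_one_pow_mul_eval_pos {P : ℝ[X]} (hP : P.Monic)
    (hdeg : 0 < P.natDegree) (B : ℝ) : ∃ b < B, 0 < (-1) ^ P.natDegree * P.eval b := by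
  set Q := C ((-1 : ℝ) ^ P.natDegree) * P.comp (-X)
  have hQ : ∀ x, Q.eval x = (-1) ^ P.natDegree * P.eval (-x) := by simp [Q, eval_comp]
  have hQlc : Q.leadingCoeff = 1 := by
    rw [leadingCoeff_mul, leadingCoeff_C, leadingCoeff_comp (by simp), hP.leadingCoeff, one_mul]
    simp [← mul_pow]
  have hQdeg : 0 < Q.degree := by
    rw [← natDegree_pos_iff_degree_pos, natDegree_C_mul (by simp), natDegree_comp]
    simpa using hdeg
  obtain ⟨x, hx, hxB⟩ := (((Q.tendsto_atTop_of_leadingCoeff_nonneg hQdeg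
    (hQlc ▸ zero_le_one)).eventually_gt_atTop 0).and (eventually_gt_atTop (-B))).exists
  exact ⟨-x, by linarith, by rwa [hQ] at hx⟩

theorem exists_root_interlacing {P : ℝ[X]} (hP : P.Monic) (hdeg : P.natDegree = n)
    {s : Fin n → ℝ} (hs : StrictAnti s) (hsign : ∀ j : Fin n, 0 < (-1) ^ (j : ℕ) * P.eval (s j))
    (i : Fin n) : ∃ x, P.IsRoot x ∧ x < s i ∧ ∀ h : (i : ℕ) + 1 < n, s ⟨i + 1, h⟩ < x := by
  obtain ⟨a, has, ha_lower, ha⟩ : ∃ a < s i, (∀ h : (i : ℕ) + 1 < n, s ⟨i + 1, h⟩ ≤ a) ∧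
      0 < (-1) ^ ((i : ℕ) + 1) * P.eval a := by
    by_cases h : (i : ℕ) + 1 < n
    · exact ⟨s ⟨i + 1, h⟩, hs (Fin.lt_def.2 (Nat.lt_succ_self _)), fun _ => le_rfl, hsign ⟨i + 1, h⟩⟩
    · -- past the last node, the sign of `P` near `-∞` takes the place of the next node
      obtain ⟨a, ha, hpos⟩ := hP.exists_lt_neg_one_pow_mul_eval_pos (by omega) (s i)
      exact ⟨a, ha, fun h' => absurd h' h, by rwa [hdeg, show n = (i : ℕ) + 1 by omega] at hpos⟩
  rw [pow_succ, mul_neg_one, neg_mul, neg_pos] at ha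
  obtain ⟨x, hx, hroot⟩ := intermediate_value_Ioo has.le
    (continuous_const.mul P.continuous).continuousOn ⟨ha, hsign i⟩
  exact ⟨x, (mul_eq_zero.1 hroot).resolve_left (pow_ne_zero _ (by norm_num)), hx.2,
    fun h => (ha_lower h).trans_lt hx.1⟩

theorem Polynomial.Monic.eq_prod_X_sub_C_of_injective {R : Type*} [CommRing R] [IsDomain R]
    {P : R[X]} (hP : P.Monic) (hdeg : P.natDegree = n) {r : Fin n → R}
    (hr : Function.Injective r) (hroot : ∀ i, P.IsRoot (r i)) :
    P = ∏ i, (X - C (r i)) := by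
  set m := univ.val.map r
  have hle : m ≤ P.roots := (Multiset.le_iff_subset (univ.nodup.map hr)).2 fun a ha => by
    obtain ⟨i, -, rfl⟩ := Multiset.mem_map.1 ha
    exact (mem_roots hP.ne_zero).2 (hroot i)
  have hcard : Multiset.card m = n := by simp [m]
  have hroots : P.roots = m :=
    (Multiset.eq_of_le_of_card_le hle (hcard ▸ hdeg ▸ P.card_roots')).symm
  rw [← prod_multiset_X_sub_C_of_monic_of_roots_card_eq hP (by rw [hroots, hcard, hdeg]), hroots,
    Multiset.map_map]
  rfl

theorem exists_interlacing_roots {P : ℝ[X]} (hP : P.Monic) (hdeg : P.natDegree = n)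
    {s : Fin n → ℝ} (hs : StrictAnti s) (hsign : ∀ j : Fin n, 0 < (-1) ^ (j : ℕ) * P.eval (s j)) :
    ∃ r : Fin n → ℝ, P = ∏ i, (X - C (r i)) ∧ (∀ i, r i < s i) ∧
      ∀ i : Fin n, ∀ h : (i : ℕ) + 1 < n, s ⟨i + 1, h⟩ < r i := by
  choose r hroot hlt hgt using exists_root_interlacing hP hdeg hs hsign
  have hanti : StrictAnti r := fun i j hij => by
    have h : (i : ℕ) + 1 < n := by omega
    calc r j < s j := hlt j
      _ ≤ s ⟨i + 1, h⟩ := hs.antitone (Fin.le_def.2 hij)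
      _ < r i := hgt i h
  exact ⟨r, hP.eq_prod_X_sub_C_of_injective hdeg hanti.injective hroot, hlt, hgt⟩

/-- Spectrum of the relaxation matrix `S` of the diffusive approximation, with positive
weights `μ_ℓ > 0` and increasing nodes `0 < θ_1 < … < θ_L`: `0` is a simple eigenvalue,
and the `L` remaining eigenvalues `λ_1, …, λ_L` are real, negative, and interlace the
nodes: `λ_L < -θ_L² < … < -θ_(ℓ+1)² < λ_ℓ < -θ_ℓ² < … < λ_1 < -θ_1² < 0`. -/
theorem relaxation_matrix_spectrum (α γα ε : ℝ) (L : ℕ)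
    (hα0 : 0 < α) (hα1 : α < 1)
    (hγ : γα = 2 * Real.sin (Real.pi * α) / Real.pi) (hε : 0 < ε)
    (μ θ : Fin L → ℝ) (hμ : ∀ ℓ, 0 < μ ℓ) (hθ0 : ∀ ℓ, 0 < θ ℓ) (hθmono : StrictMono θ)
    (S : Matrix (Fin (L + 1)) (Fin (L + 1)) ℝ)
    (hS : S = Matrix.of (Fin.cons
      (Fin.cons 0 (fun ℓ : Fin L => -(ε * μ ℓ)))
      (fun j : Fin L => Fin.cons 0 (fun ℓ : Fin L =>
        -((if j = ℓ then θ j ^ 2 else 0) + ε * γα * θ j ^ (2 * α - 1) * μ ℓ))))) :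
    ∃ lam : Fin L → ℝ,
      S.charpoly = Polynomial.X * ∏ ℓ, (Polynomial.X - Polynomial.C (lam ℓ)) ∧
      (∀ i : Fin L, lam i < -θ i ^ 2) ∧
      (∀ i : Fin L, ∀ h : (i : ℕ) + 1 < L, -θ ⟨(i : ℕ) + 1, h⟩ ^ 2 < lam i) := by
  have hγα : 0 < γα := hγ ▸ div_pos (mul_pos two_pos (Real.sin_pos_of_pos_of_lt_pi
    (mul_pos Real.pi_pos hα0) (mul_lt_of_lt_one_right Real.pi_pos hα1))) Real.pi_pos
  set u : Fin L → ℝ := fun j => ε * γα * θ j ^ (2 * α - 1)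
  set s : Fin L → ℝ := fun j => -θ j ^ 2
  have hcol : ∀ i, S i 0 = 0 := fun i => by
    subst hS
    exact Fin.cases rfl (fun _ => rfl) i
  have hblock : S.submatrix Fin.succ Fin.succ = diagonal s - vecMulVec u μ := by
    ext i j
    subst hS
    simp only [submatrix_apply, of_apply, Fin.cons_succ, Matrix.sub_apply, diagonal_apply,
      vecMulVec_apply, s, u]
    split_ifs <;> ring
  have hs : StrictAnti s := fun i j hij =>
    neg_lt_neg (pow_lt_pow_left₀ (hθmono hij) (hθ0 i).le two_ne_zero)
  have hsign : ∀ j : Fin L, 0 < (-1) ^ (j : ℕ) * (secularPoly s (u * μ)).eval (s j) := fun j => by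
    rw [eval_secularPoly_self, mul_left_comm]
    exact mul_pos (mul_pos (mul_pos (mul_pos hε hγα) (Real.rpow_pos_of_pos (hθ0 j) _)) (hμ j))
      (neg_one_pow_mul_prod_erase_sub_pos hs j)
  obtain ⟨lam, hfactor, hlt, hgt⟩ := exists_interlacing_roots (secularPoly_monic s _)
    (natDegree_secularPoly s _) hs hsign
  refine ⟨lam, ?_, hlt, hgt⟩
  rw [S.charpoly_eq_X_mul_charpoly_submatrix_succ hcol, hblock, charpoly_diagonal_sub_vecMulVec,
    hfactor]
end

section
/- For all reals y > 0 and s > 0, ∫₀^∞ e^{-s t} · ( y / (2 √π t^{3/2}) ) · e^{-y²/(4t)} dt = e^{-y √s}. In other words, the function h_{1/2}(y, t) = y e^{-y²/(4t)} / (2 √π t^{3/2}) on t ∈ (0, ∞) has Laplace transform (in t) equal to exp(−y s^{1/2}). -/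
/-!
After the substitution `t = x⁻²` the Laplace integral becomes
`(y / √π) ∫₀^∞ exp (-(y²/4 · x² + s / x²)) dx`. Completing the square,
`a x² + c / x² = (√a x - √(a c) / (√a x))² + 2 √(a c)`, reduces this to the Gaussian integral via
the Cauchy–Schlömilch transformation `∫₀^∞ f (u - b / u) du = ½ ∫ f` for even integrable `f`
and `b > 0`: the map `u ↦ u - b / u` sends `(0, ∞)` bijectively onto `ℝ` with Jacobian
`1 + b / u²`, and the inversion `u ↦ b / u` shows that the `b / u²` part of the Jacobian contributes
exactly as much as the `1` part.
-/

open Real Set MeasureTheory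

section CauchySchlomilch

variable {E : Type*} [NormedAddCommGroup E] [NormedSpace ℝ E] {b : ℝ}

lemma one_le_one_add_div_sq (hb : 0 ≤ b) (u : ℝ) : 1 ≤ 1 + b / u ^ 2 :=
  le_add_of_nonneg_right (by positivity)

lemma one_add_div_sq_pos (hb : 0 < b) (u : ℝ) : 0 < 1 + b / u ^ 2 :=
  zero_lt_one.trans_le (one_le_one_add_div_sq hb.le u)

lemma hasDerivAt_const_div_id {u : ℝ} (hu : u ≠ 0) :
    HasDerivAt (fun u : ℝ => b / u) (-(b / u ^ 2)) u := by
  simpa only [div_eq_mul_inv, mul_neg] using (hasDerivAt_inv hu).const_mul b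

lemma hasDerivAt_sub_div {u : ℝ} (hu : u ≠ 0) :
    HasDerivAt (fun u : ℝ => u - b / u) (1 + b / u ^ 2) u := by
  simpa only [sub_neg_eq_add] using (hasDerivAt_id' u).fun_sub (hasDerivAt_const_div_id hu)

lemma strictMonoOn_sub_div (hb : 0 ≤ b) : StrictMonoOn (fun u : ℝ => u - b / u) (Ioi 0) := by
  intro u hu v hv huv
  have : b / v ≤ b / u := div_le_div_of_nonneg_left hb hu huv.le
  dsimp only
  linarith

lemma image_sub_div_Ioi (hb : 0 < b) : (fun u : ℝ => u - b / u) '' Ioi 0 = univ := by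
  refine eq_univ_of_forall fun c => ?_
  -- the positive root of `u ^ 2 - c u - b = 0`
  set r := √(c ^ 2 + 4 * b)
  have hr : r ^ 2 = c ^ 2 + 4 * b := sq_sqrt (by positivity)
  have hcr : |c| < r := by
    rw [← sqrt_sq_eq_abs]
    exact sqrt_lt_sqrt (sq_nonneg c) (by linarith)
  have hu : 0 < (c + r) / 2 := by linarith [neg_le_abs c]
  refine ⟨(c + r) / 2, hu, ?_⟩
  have : c + r ≠ 0 := by linarith
  field_simp
  linear_combination hr

lemma strictAntiOn_const_div (hb : 0 < b) : StrictAntiOn (fun u : ℝ => b / u) (Ioi 0) :=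
  fun _ hu _ _ huv => div_lt_div_of_pos_left hb hu huv

lemma image_const_div_Ioi (hb : 0 < b) : (fun u : ℝ => b / u) '' Ioi 0 = Ioi 0 := by
  refine Subset.antisymm (image_subset_iff.2 fun u hu => div_pos hb hu) fun x hx => ?_
  exact ⟨b / x, div_pos hb hx, div_div_cancel₀ hb.ne'⟩

lemma integral_smul_comp_sub_div_Ioi (f : ℝ → E) (hb : 0 < b) :
    ∫ u in Ioi 0, (1 + b / u ^ 2) • f (u - b / u) = ∫ x, f x := by
  conv_rhs => rw [← setIntegral_univ, ← image_sub_div_Ioi hb]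
  rw [integral_image_eq_integral_abs_deriv_smul measurableSet_Ioi
      (fun u hu => (hasDerivAt_sub_div (ne_of_gt hu)).hasDerivWithinAt)
      (strictMonoOn_sub_div hb.le).injOn]
  refine setIntegral_congr_fun measurableSet_Ioi fun u _ => ?_
  rw [abs_of_pos (one_add_div_sq_pos hb u)]

lemma integrableOn_smul_comp_sub_div_Ioi {f : ℝ → E} (hf : Integrable f) (hb : 0 < b) :
    IntegrableOn (fun u => (1 + b / u ^ 2) • f (u - b / u)) (Ioi 0) := by
  have h := (integrableOn_image_iff_integrableOn_abs_deriv_smul measurableSet_Ioi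
    (fun u hu => (hasDerivAt_sub_div (ne_of_gt hu)).hasDerivWithinAt)
    (strictMonoOn_sub_div hb.le).injOn f).1 (by rw [image_sub_div_Ioi hb]; exact hf.integrableOn)
  refine h.congr_fun (fun u _ => ?_) measurableSet_Ioi
  simp only [abs_of_pos (one_add_div_sq_pos hb u)]

lemma integrableOn_comp_sub_div_Ioi {f : ℝ → E} (hf : Integrable f) (hb : 0 < b) :
    IntegrableOn (fun u => f (u - b / u)) (Ioi 0) := by
  have hbounded : IntegrableOn ((fun u : ℝ => (1 + b / u ^ 2)⁻¹) •
      fun u => (1 + b / u ^ 2) • f (u - b / u)) (Ioi 0) :=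
    (integrableOn_smul_comp_sub_div_Ioi hf hb).bdd_smul 1
      (Measurable.aestronglyMeasurable (by fun_prop)) (ae_of_all _ fun u => by
        rw [norm_inv, Real.norm_of_nonneg (one_add_div_sq_pos hb u).le]
        exact inv_le_one_of_one_le₀ (one_le_one_add_div_sq hb.le u))
  exact hbounded.congr_fun (fun u _ => inv_smul_smul₀ (one_add_div_sq_pos hb u).ne' _)
    measurableSet_Ioi

lemma integral_div_sq_smul_comp_sub_div_Ioi (f : ℝ → E) (hb : 0 < b) :
    ∫ u in Ioi 0, (b / u ^ 2) • f (u - b / u) = ∫ u in Ioi 0, f (b / u - u) := by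
  conv_rhs => rw [← image_const_div_Ioi hb]
  rw [integral_image_eq_integral_abs_deriv_smul measurableSet_Ioi
    (fun u hu => (hasDerivAt_const_div_id (ne_of_gt hu)).hasDerivWithinAt)
    (strictAntiOn_const_div hb).injOn]
  refine setIntegral_congr_fun measurableSet_Ioi fun u hu => ?_
  rw [abs_neg, abs_of_pos (div_pos hb (pow_pos hu 2)), div_div_cancel₀ hb.ne']

theorem integral_comp_sub_div_Ioi_of_even {f : ℝ → E} (hf : Integrable f)
    (heven : ∀ x, f (-x) = f x) (hb : 0 < b) :
    ∫ u in Ioi 0, f (u - b / u) = (2 : ℝ)⁻¹ • ∫ x, f x := by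
  have hinv : ∫ u in Ioi 0, (b / u ^ 2) • f (u - b / u) = ∫ u in Ioi 0, f (u - b / u) := by
    simp_rw [integral_div_sq_smul_comp_sub_div_Ioi f hb, ← neg_sub _ (b / _), heven]
  have hsplit : ∫ u in Ioi 0, (b / u ^ 2) • f (u - b / u) =
      (∫ x, f x) - ∫ u in Ioi 0, f (u - b / u) := by
    rw [← integral_smul_comp_sub_div_Ioi f hb, ← integral_sub
      (integrableOn_smul_comp_sub_div_Ioi hf hb) (integrableOn_comp_sub_div_Ioi hf hb)]
    simp only [add_smul, one_smul, add_sub_cancel_left]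
  rw [eq_inv_smul_iff₀ two_ne_zero, two_smul, ← eq_sub_iff_add_eq, ← hsplit, hinv]

end CauchySchlomilch

theorem integral_exp_neg_mul_sq_add_div_sq_Ioi {a c : ℝ} (ha : 0 < a) (hc : 0 < c) :
    ∫ x in Ioi 0, exp (-(a * x ^ 2 + c / x ^ 2)) = √(π / a) / 2 * exp (-2 * √(a * c)) := by
  set b := √(a * c)
  have hb : 0 < b := sqrt_pos.2 (mul_pos ha hc)
  have hsa : 0 < √a := sqrt_pos.2 ha
  have hschlomilch : ∫ u in Ioi 0, exp (-1 * (u - b / u) ^ 2) = √π / 2 := by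
    rw [integral_comp_sub_div_Ioi_of_even (integrable_exp_neg_mul_sq one_pos)
      (fun x => by rw [neg_sq]) hb, integral_gaussian, div_one, smul_eq_mul, inv_mul_eq_div]
  have hsquare : ∀ x ∈ Ioi (0 : ℝ), exp (-(a * x ^ 2 + c / x ^ 2)) =
      exp (-2 * b) * exp (-1 * (√a * x - b / (√a * x)) ^ 2) := fun x hx => by
    have hx : x ≠ 0 := ne_of_gt hx
    rw [← exp_add]
    congr 1
    field_simp
    linear_combination (x ^ 4 * √a ^ 2 - c) * sq_sqrt ha.le + sq_sqrt (mul_pos ha hc).le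
  rw [setIntegral_congr_fun measurableSet_Ioi hsquare,
    integral_comp_mul_left_Ioi (fun u => exp (-2 * b) * exp (-1 * (u - b / u) ^ 2)) 0 hsa,
    mul_zero, integral_const_mul, hschlomilch, sqrt_div' _ ha.le, smul_eq_mul]
  ring

lemma smul_laplace_levy_integrand_rpow_neg_two (y s : ℝ) {x : ℝ} (hx : 0 < x) :
    (|(-2 : ℝ)| * x ^ ((-2 : ℝ) - 1)) •
        (exp (-s * x ^ (-2 : ℝ)) * (y / (2 * √π * (x ^ (-2 : ℝ)) ^ ((3 : ℝ) / 2))) *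
          exp (-y ^ 2 / (4 * x ^ (-2 : ℝ)))) =
      y / √π * exp (-(y ^ 2 / 4 * x ^ 2 + s / x ^ 2)) := by
  have h2 : x ^ (-2 : ℝ) = (x ^ 2)⁻¹ := by
    rw [show (-2 : ℝ) = -(2 : ℕ) by norm_num, rpow_neg hx.le, rpow_natCast]
  have h3 : x ^ ((-2 : ℝ) - 1) = (x ^ 3)⁻¹ := by
    rw [show (-2 : ℝ) - 1 = -(3 : ℕ) by norm_num, rpow_neg hx.le, rpow_natCast]
  have h32 : (x ^ (-2 : ℝ)) ^ ((3 : ℝ) / 2) = (x ^ 3)⁻¹ := by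
    rw [← rpow_mul hx.le, show (-2 : ℝ) * (3 / 2) = -(3 : ℕ) by norm_num, rpow_neg hx.le,
      rpow_natCast]
  have hexp : exp (-s * (x ^ 2)⁻¹) * exp (-y ^ 2 / (4 * (x ^ 2)⁻¹)) =
      exp (-(y ^ 2 / 4 * x ^ 2 + s / x ^ 2)) := by
    rw [← exp_add]
    congr 1
    field_simp
    ring
  rw [h3, h32, h2, smul_eq_mul, abs_neg, abs_two, ← hexp]
  field_simp

/-- Laplace-transform identity behind the closed-form solution for `α = 1/2`: for
`y > 0` and `s > 0`,
`∫₀^∞ e^(-s t) · (y / (2 √π t^(3/2))) · e^(-y²/(4t)) dt = e^(-y √s)`. -/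
theorem laplace_transform_levy_kernel (y s : ℝ) (hy : 0 < y) (hs : 0 < s) :
    ∫ t in Set.Ioi (0 : ℝ),
        Real.exp (-s * t) * (y / (2 * Real.sqrt Real.pi * t ^ ((3 : ℝ) / 2))) *
          Real.exp (-y ^ 2 / (4 * t)) =
      Real.exp (-y * Real.sqrt s) := by
  rw [← integral_comp_rpow_Ioi _ (show (-2 : ℝ) ≠ 0 by norm_num),
    setIntegral_congr_fun measurableSet_Ioi
      fun x hx => smul_laplace_levy_integrand_rpow_neg_two y s hx,
    integral_const_mul, integral_exp_neg_mul_sq_add_div_sq_Ioi (by positivity) hs,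
    show y ^ 2 / 4 = (y / 2) ^ 2 by ring, sqrt_div' _ (sq_nonneg _), sqrt_mul (sq_nonneg _),
    sqrt_sq (by positivity), show -2 * (y / 2 * √s) = -y * √s by ring]
  field_simp
end
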